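/- arXiv:1212.5158 — 4 statements merged into one kernel-verified Lean document; each statement's English description precedes it below -/
import Mathlib

section
/- Let P be a proper Poisson prime ideal of A (a Poisson prime ideal that is not residually null). Then for each i = 1, …, n−2, it is not the case that both s_i ∈ P and t_i ∈ P. -/
/- STATEMENT 7: Let P be a proper (not residually null) Poisson prime ideal of
A = ℂ[x_1,…,x_{m+2}].  Then for each i, not both s_i ∈ P and t_i ∈ P. -/

noncomputable section
open MvPolynomial

/-- The polynomial algebra `A = ℂ[x_1,…,x_{m+2}]`. -/
abbrev PA (m : ℕ) : Type := MvPolynomial (Fin (m + 2)) ℂ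

/-- The rational function field `B = ℂ(x_1,…,x_{m+2})`. -/
abbrev FB (m : ℕ) : Type := FractionRing (PA m)

/-- The rows of the matrix computing the Poisson bracket on `A`: ∇f, ∇g and, for
each `i`, `t_i²∇(s_i/t_i) = t_i∇s_i − s_i∇t_i`. -/
def pbrRows {m : ℕ} (s t : Fin m → PA m) (f g : PA m) :
    Fin (m + 2) → Fin (m + 2) → PA m :=
  Fin.cons (fun j => pderiv j f)
    (Fin.cons (fun j => pderiv j g)
      (fun k => fun j => t k * pderiv j (s k) - s k * pderiv j (t k)))

/-- The Poisson bracket `{f,g} = (t_1⋯t_m)²·Jac(f,g,s_1/t_1,…,s_m/t_m)` restricted to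
the polynomial algebra `A`. -/
def pbr {m : ℕ} (s t : Fin m → PA m) (f g : PA m) : PA m :=
  Matrix.det (Matrix.of (pbrRows s t f g))

theorem statement_7 {m : ℕ} (hm : 1 ≤ m)
    (s t : Fin m → PA m)
    (ht : ∀ i, t i ≠ 0)
    (hcop : ∀ i, ∀ d : PA m, d ∣ s i → d ∣ t i → IsUnit d)
    (hind : AlgebraicIndependent ℂ
      (fun i => algebraMap (PA m) (FB m) (s i) / algebraMap (PA m) (FB m) (t i)))
    (P : Ideal (PA m)) (hPprime : P.IsPrime)
    (hPpoisson : ∀ u ∈ P, ∀ r : PA m, pbr s t u r ∈ P)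
    (hproper : ¬ ∀ f g : PA m, pbr s t f g ∈ P) :
    ∀ i, ¬ (s i ∈ P ∧ t i ∈ P) := by
  rintro i ⟨hs, htP⟩
  apply hproper
  intro f g
  rw [← Ideal.Quotient.eq_zero_iff_mem]
  unfold pbr
  rw [RingHom.map_det]
  apply Matrix.det_eq_zero_of_row_eq_zero (i.succ.succ)
  intro j
  simp only [RingHom.mapMatrix_apply, Matrix.map_apply, Matrix.of_apply, pbrRows,
    Fin.cons_succ, Ideal.Quotient.eq_zero_iff_mem]
  exact P.sub_mem (P.mul_mem_right _ htP) (P.mul_mem_right _ hs)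

end
end

section
/- Suppose t_1 = t_2 = ⋯ = t_{n−2} = 1 and let C = ℂ[s_1, s_2, …, s_{n−2}] be the ℂ-subalgebra of A generated by s_1, …, s_{n−2}. If P is a proper Poisson prime ideal of A, then P is a minimal prime ideal of A over the extended ideal (P ∩ C)·A; in particular there exists a prime ideal Q of C (namely Q = P ∩ C) such that P is a minimal prime over Q·A. -/
/- STATEMENT 12: Suppose t_1 = ⋯ = t_{n−2} = 1 and let C = ℂ[s_1,…,s_{n−2}] ⊆ A.
If P is a proper Poisson prime ideal of A then P is a minimal prime over (P ∩ C)·A;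
in particular there is a prime ideal Q of C with P minimal over Q·A. -/

noncomputable section
open MvPolynomial

/-!
Pick `f, g` with `{f, g} ∉ P` and a prime `p` with `(P ∩ C)·A ⊆ p ⊆ P`.

The derivations `{·, g}` and `{·, f}` preserve `P` and kill `ℂ[g, s]` and `ℂ[f, s]`. Writing an
element of `ℂ[f, g, s] ∩ P` as a polynomial in `f` over `ℂ[g, s]`, and the coefficients as
polynomials in `g` over `C`, repeated differentiation puts every coefficient in `P ∩ C`; hence
`ℂ[f, g, s] ∩ P ⊆ p`.

The Jacobian determinant of `(f, g, s)` is `{f, g} ∉ p`, so the Kähler differentials of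
`Frac(A/p)` over `ℂ(f, g, s)` vanish, and `A/p` is algebraic over the image of `ℂ[f, g, s]`.
A nonzero ideal of a domain that is algebraic over a subring meets the subring nontrivially;
for `P/p` this forces `P = p`.
-/

section Jacobian

variable {R : Type*} [CommRing R] {n : ℕ}

def jacobianMatrix {ι σ : Type*} (F : ι → MvPolynomial σ R) : Matrix ι σ (MvPolynomial σ R) :=
  Matrix.of fun i j => pderiv j (F i)

lemma det_jacobianMatrix_comp_perm {σ : Type*} [Fintype σ] [DecidableEq σ]
    (F : σ → MvPolynomial σ R) (e : Equiv.Perm σ) :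
    (jacobianMatrix (F ∘ e)).det = Equiv.Perm.sign e * (jacobianMatrix F).det :=
  Matrix.det_permute e (jacobianMatrix F)

/-- `f ↦ det Jac(f, G)`, written via the Laplace expansion along the first row as a combination of
the `pderiv j`, so that it is a derivation by construction. -/
def jacobianDerivation (G : Fin n → MvPolynomial (Fin (n + 1)) R) :
    Derivation R (MvPolynomial (Fin (n + 1)) R) (MvPolynomial (Fin (n + 1)) R) :=
  ∑ j : Fin (n + 1), ((-1) ^ (j : ℕ) * (Matrix.of fun i k => pderiv (j.succAbove k) (G i)).det) •
    pderiv j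

lemma jacobianDerivation_apply (G : Fin n → MvPolynomial (Fin (n + 1)) R)
    (f : MvPolynomial (Fin (n + 1)) R) :
    jacobianDerivation G f = (jacobianMatrix (Fin.cons f G)).det := by
  rw [Matrix.det_succ_row_zero, jacobianDerivation, ← Derivation.coeFnAddMonoidHom_apply,
    map_sum, Finset.sum_apply]
  refine Finset.sum_congr rfl fun j _ => ?_
  simp only [Derivation.coeFnAddMonoidHom_apply, Derivation.smul_apply, smul_eq_mul,
    jacobianMatrix, Matrix.submatrix, Matrix.of_apply, Fin.cons_zero, Fin.cons_succ]
  ring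

lemma jacobianDerivation_apply_self (G : Fin n → MvPolynomial (Fin (n + 1)) R) (i : Fin n) :
    jacobianDerivation G (G i) = 0 := by
  rw [jacobianDerivation_apply]
  exact Matrix.det_zero_of_row_eq (Fin.succ_ne_zero i).symm (by ext; simp [jacobianMatrix])

lemma jacobianDerivation_eq_zero_of_mem_adjoin (G : Fin n → MvPolynomial (Fin (n + 1)) R)
    {z : MvPolynomial (Fin (n + 1)) R} (hz : z ∈ Algebra.adjoin R (Set.range G)) :
    jacobianDerivation G z = 0 :=
  Derivation.eqOn_adjoin (D2 := 0) (by rintro _ ⟨i, rfl⟩; exact jacobianDerivation_apply_self G i)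
    hz

end Jacobian

section Constants

open Polynomial

variable {k A : Type*} [CommRing k] [CommRing A] [Algebra k A]

lemma Polynomial.aeval_mem_of_coeff_mem {S : Subalgebra k A} (I : Ideal A) (t : A) (F : S[X])
    (hF : ∀ i, (F.coeff i : A) ∈ I) : aeval t F ∈ I := by
  rw [aeval_eq_sum_range]
  exact I.sum_mem fun i _ => I.mul_mem_right _ (by simpa [Algebra.smul_def] using hF i)

lemma Derivation.map_aeval_of_forall_mem_eq_zero (D : Derivation k A A) {S : Subalgebra k A}
    (hS : ∀ s ∈ S, D s = 0) (t : A) (F : S[X]) :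
    D (aeval t F) = aeval t (derivative F) * D t := by
  let D' : Derivation S A A := Derivation.mk'
    { toFun := D
      map_add' := D.map_add
      map_smul' := fun c a => by simp [Algebra.smul_def, D.leibniz, hS c c.2] }
    D.leibniz
  exact D'.map_aeval F t

lemma coeff_mem_of_aeval_mem [Algebra ℚ A] (D : Derivation k A A) {S : Subalgebra k A}
    (hS : ∀ s ∈ S, D s = 0) (P : Ideal A) [P.IsPrime] (hP : ∀ u ∈ P, D u ∈ P) {t : A}
    (ht : D t ∉ P) (F : S[X]) (hF : aeval t F ∈ P) (i : ℕ) : (F.coeff i : A) ∈ P := by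
  induction hn : F.natDegree using Nat.strong_induction_on generalizing F i with
  | _ n ih =>
  have hF' : aeval t (derivative F) ∈ P := by
    have := hP _ hF
    rw [D.map_aeval_of_forall_mem_eq_zero hS] at this
    exact (‹P.IsPrime›.mem_or_mem this).resolve_right ht
  have hsucc : ∀ j, (F.coeff (j + 1) : A) ∈ P := by
    intro j
    rcases Nat.eq_zero_or_pos n with rfl | hn0
    · simp [coeff_eq_zero_of_natDegree_lt (hn ▸ Nat.succ_pos j)]
    · have := ih _ (hn ▸ natDegree_derivative_lt (by omega)) _ hF' j rfl
      rw [coeff_derivative, Subalgebra.coe_mul] at this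
      refine (‹P.IsPrime›.mem_or_mem this).resolve_right (P.notMem_of_isUnit ?_)
      have : IsUnit ((j + 1 : ℚ)) := isUnit_iff_ne_zero.mpr (by positivity)
      simpa using this.map (algebraMap ℚ A)
  rcases i with _ | j
  · have hdivX : aeval t F.divX ∈ P :=
      aeval_mem_of_coeff_mem P t _ fun j => by simpa [coeff_divX] using hsucc j
    have hsplit : t * aeval t F.divX + F.coeff 0 = aeval t F := by
      have := congrArg (Polynomial.aeval t) (X_mul_divX_add F)
      rwa [map_add, map_mul, Polynomial.aeval_X, Polynomial.aeval_C] at this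
    rw [eq_sub_of_add_eq' hsplit]
    exact P.sub_mem hF (P.mul_mem_left t hdivX)
  · exact hsucc j

lemma exists_aeval_eq_of_mem_adjoin_insert {S : Subalgebra k A} {t z : A}
    (hz : z ∈ Algebra.adjoin k (insert t (S : Set A))) : ∃ F : S[X], aeval t F = z := by
  refine (Algebra.adjoin_le (S := ((Polynomial.aeval (R := S) t).restrictScalars k).range) ?_) hz
  rintro _ (rfl | hs)
  · exact ⟨X, Polynomial.aeval_X _⟩
  · exact ⟨C ⟨_, hs⟩, Polynomial.aeval_C _ _⟩

theorem mem_map_comap_of_mem_adjoin_insert [Algebra ℚ A] (D : Derivation k A A)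
    {S : Subalgebra k A} (hS : ∀ s ∈ S, D s = 0) (P : Ideal A) [P.IsPrime]
    (hP : ∀ u ∈ P, D u ∈ P) {t : A} (ht : D t ∉ P) {z : A}
    (hz : z ∈ Algebra.adjoin k (insert t (S : Set A))) (hzP : z ∈ P) :
    z ∈ (P.comap S.val).map S.val := by
  obtain ⟨F, rfl⟩ := exists_aeval_eq_of_mem_adjoin_insert hz
  exact aeval_mem_of_coeff_mem _ t F fun i =>
    Ideal.mem_map_of_mem _ (coeff_mem_of_aeval_mem D hS P hP ht F hzP i)

end Constants

section Algebraicity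

lemma Derivation.map_aeval_eq_sum {k B M σ : Type*} [CommRing k] [CommRing B] [Algebra k B]
    [AddCommGroup M] [Module B M] [Module k M] [IsScalarTower k B M] [Fintype σ] [DecidableEq σ]
    (D : Derivation k B M) (x : σ → B) (z : MvPolynomial σ k) :
    D (aeval x z) = ∑ j, aeval x (pderiv j z) • D (x j) := by
  induction z using MvPolynomial.induction_on with
  | C c => simp
  | add p q hp hq => simp [hp, hq, add_smul, Finset.sum_add_distrib]
  | mul_X p i hp =>
    simp [hp, pderiv_X, Pi.single_apply, add_smul, mul_smul, Finset.sum_add_distrib,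
      Finset.smul_sum, mul_comm, apply_ite, ite_smul, add_comm]

open Matrix in
lemma Matrix.eq_zero_of_forall_sum_smul_eq_zero {K M n : Type*} [Field K] [AddCommGroup M]
    [Module K M] [Fintype n] [DecidableEq n] (A : Matrix n n K) (hA : A.det ≠ 0) (v : n → M)
    (h : ∀ i, ∑ j, A i j • v j = 0) : v = 0 := by
  have hvec : ∀ w, Fintype.linearCombination K v (w ᵥ* A) = 0 := by
    intro w
    simp [Matrix.vecMul_eq_sum, Fintype.linearCombination_apply, h]
  funext k
  have := hvec (Pi.single k 1 ᵥ* A⁻¹)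
  rwa [Matrix.vecMul_vecMul, Matrix.nonsing_inv_mul _ (isUnit_iff_ne_zero.mpr hA),
    Matrix.vecMul_one, Fintype.linearCombination_apply_single, one_smul] at this

lemma Derivation.map_eq_zero_of_jacobian_det_ne_zero {k L M : Type*} [Field k] [Field L]
    [Algebra k L] [AddCommGroup M] [Module L M] [Module k M] [IsScalarTower k L M] {n : ℕ}
    (D : Derivation k L M) (ψ : MvPolynomial (Fin n) k →ₐ[k] L) (F : Fin n → MvPolynomial (Fin n) k)
    (hdet : ψ (jacobianMatrix F).det ≠ 0) (hF : ∀ i, D (ψ (F i)) = 0) (z : MvPolynomial (Fin n) k) :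
    D (ψ z) = 0 := by
  have hψ : ∀ z, ψ z = aeval (ψ ∘ X) z := fun z => by rw [← MvPolynomial.aeval_unique]
  have hX : (fun j => D ((ψ ∘ X) j)) = 0 := by
    refine ((jacobianMatrix F).map ψ).eq_zero_of_forall_sum_smul_eq_zero ?_ _ fun i => ?_
    · rwa [AlgHom.map_det] at hdet
    · rw [← hF i, hψ, D.map_aeval_eq_sum]
      simp only [Matrix.map_apply, jacobianMatrix, Matrix.of_apply, ← hψ]
  rw [hψ, D.map_aeval_eq_sum]
  simp only [congrFun hX, Pi.zero_apply, smul_zero, Finset.sum_const_zero]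

lemma Derivation.eq_zero_of_forall_algebraMap_eq_zero {k T L M : Type*} [CommRing k] [CommRing T]
    [Field L] [Algebra k L] [Algebra T L] [IsFractionRing T L] [AddCommGroup M] [Module L M]
    [Module k M] (D : Derivation k L M) (h : ∀ a : T, D (algebraMap T L a) = 0) (l : L) :
    D l = 0 := by
  obtain ⟨a, b, -, rfl⟩ := IsFractionRing.div_surjective T l
  simp [Derivation.leibniz_div, h]

lemma Algebra.FormallyUnramified.of_forall_D_eq_zero {R S : Type*} [CommRing R] [CommRing S]
    [Algebra R S] (h : ∀ x : S, KaehlerDifferential.D R S x = 0) :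
    Algebra.FormallyUnramified R S := by
  refine ⟨?_⟩
  rw [← Submodule.subsingleton_iff S, ← subsingleton_iff_bot_eq_top,
    ← KaehlerDifferential.span_range_derivation, eq_comm, Submodule.span_eq_bot]
  rintro _ ⟨x, rfl⟩
  exact h x

open scoped IntermediateField.algebraAdjoinAdjoin in
theorem isAlgebraic_map_adjoin_of_jacobian_det_ne_zero {k T : Type*} [Field k] [CommRing T]
    [IsDomain T] [Algebra k T] {n : ℕ} (φ : MvPolynomial (Fin n) k →ₐ[k] T)
    (hφ : Function.Surjective φ) (F : Fin n → MvPolynomial (Fin n) k)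
    (hdet : φ (jacobianMatrix F).det ≠ 0) (t : T) :
    IsAlgebraic ((Algebra.adjoin k (Set.range F)).map φ) t := by
  let L := FractionRing T
  let ι := IsScalarTower.toAlgHom k T L
  have hι : Function.Injective ι := IsFractionRing.injective T L
  let ψ := ι.comp φ
  let K := IntermediateField.adjoin k (ψ '' Set.range F)
  have hD : ∀ l : L, KaehlerDifferential.D K L l = 0 := by
    refine Derivation.eq_zero_of_forall_algebraMap_eq_zero (T := T) _ fun a => ?_
    obtain ⟨z, rfl⟩ := hφ a
    refine (KaehlerDifferential.D K L).restrictScalars k |>.map_eq_zero_of_jacobian_det_ne_zero ψ F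
      ((map_ne_zero_iff _ hι).mpr hdet) (fun i => ?_) z
    exact (KaehlerDifferential.D K L).map_algebraMap
      ⟨ψ (F i), IntermediateField.subset_adjoin k _ ⟨F i, ⟨i, rfl⟩, rfl⟩⟩
  have : Algebra.FormallyUnramified K L := .of_forall_D_eq_zero hD
  have : Algebra.FiniteType k T := .of_surjective φ hφ
  have : Algebra.EssFiniteType T L := .of_isLocalization L (nonZeroDivisors T)
  have : Algebra.EssFiniteType k L := .comp k T L
  have : Algebra.EssFiniteType K L := .of_comp k K L
  have : Algebra.IsSeparable K L := Algebra.FormallyUnramified.isSeparable K L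
  have hK : IsAlgebraic K (ι t) := (Algebra.IsSeparable.isIntegral K (ι t)).isAlgebraic
  have hR := (IsFractionRing.isAlgebraic_iff (Algebra.adjoin k (ψ '' Set.range F)) K L).mpr hK
  have hmap : ((Algebra.adjoin k (Set.range F)).map φ).map ι =
      Algebra.adjoin k (ψ '' Set.range F) := by
    rw [Subalgebra.map_map, AlgHom.map_adjoin]
  let f := (Subalgebra.equivOfEq _ _ hmap).toAlgHom.comp (ι.subalgebraMap _)
  exact hR.of_ringHom_of_comp_eq f ι
    ((Subalgebra.equivOfEq _ _ hmap).surjective.comp (ι.subalgebraMap_surjective _)) hι rfl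

lemma Ideal.le_of_forall_isAlgebraic_quotient {k A : Type*} [CommRing k] [CommRing A]
    [Algebra k A] {p P : Ideal A} [p.IsPrime] (hpP : p ≤ P) (R : Subalgebra k A)
    (hR : ∀ z ∈ R, z ∈ P → z ∈ p)
    (halg : ∀ a, IsAlgebraic (R.map (Ideal.Quotient.mkₐ k p)) (Ideal.Quotient.mk p a)) :
    P ≤ p := by
  intro a haP
  by_contra hap
  refine Ideal.comap_ne_bot_of_algebraic_mem (I := P.map (Ideal.Quotient.mk p))
    (by rwa [ne_eq, Ideal.Quotient.eq_zero_iff_mem]) (Ideal.mem_map_of_mem _ haP) (halg a) ?_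
  rw [eq_bot_iff]
  rintro ⟨_, z, hz, rfl⟩ hzP
  have hzp : z ∈ p := hR z hz ((Ideal.mem_quotient_iff_mem hpP).mp hzP)
  exact Subtype.ext (Ideal.Quotient.eq_zero_iff_mem.mpr hzp)

end Algebraicity

section Bracket

variable {m : ℕ} (s : Fin m → PA m)

lemma pbr_one_eq_det (f g : PA m) :
    pbr s (fun _ => 1) f g =
      (jacobianMatrix (Fin.cons f (Fin.cons g s) : Fin (m + 2) → PA m)).det := by
  unfold pbr pbrRows jacobianMatrix
  congr 1
  ext i j
  refine Fin.cases ?_ (fun i => Fin.cases ?_ (fun k => ?_) i) i <;> simp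

lemma pbr_one_eq_jacobianDerivation (f g : PA m) :
    pbr s (fun _ => 1) f g = jacobianDerivation (Fin.cons g s) f := by
  rw [pbr_one_eq_det, jacobianDerivation_apply]

lemma pbr_one_swap (f g : PA m) : pbr s (fun _ => 1) g f = -pbr s (fun _ => 1) f g := by
  have : (Fin.cons g (Fin.cons f s) : Fin (m + 2) → PA m) =
      Fin.cons f (Fin.cons g s) ∘ Equiv.swap 0 1 := by
    funext i
    refine Fin.cases (by simp) (fun i => Fin.cases (by simp) (fun k => ?_) i) i
    have h1 : (k.succ.succ : Fin (m + 2)) ≠ 1 := by simp [Fin.ext_iff]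
    simp [Equiv.swap_apply_of_ne_of_ne (Fin.succ_ne_zero _) h1]
  rw [pbr_one_eq_det, pbr_one_eq_det, this, det_jacobianMatrix_comp_perm,
    Equiv.Perm.sign_swap (by simp)]
  simp

lemma mem_map_comap_adjoin_of_mem_adjoin_cons (P : Ideal (PA m)) [P.IsPrime]
    (hP : ∀ u ∈ P, ∀ r : PA m, pbr s (fun _ => 1) u r ∈ P) {f g : PA m}
    (hfg : pbr s (fun _ => 1) f g ∉ P) {z : PA m}
    (hz : z ∈ Algebra.adjoin ℂ (Set.range (Fin.cons f (Fin.cons g s) : Fin (m + 2) → PA m)))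
    (hzP : z ∈ P) :
    z ∈ (P.comap (Algebra.adjoin ℂ (Set.range s)).val).map (Algebra.adjoin ℂ (Set.range s)).val := by
  have hcons : ∀ (h : PA m) {n : ℕ} (G : Fin n → PA m),
      Algebra.adjoin ℂ (Set.range (Fin.cons h G)) =
        Algebra.adjoin ℂ (insert h (Algebra.adjoin ℂ (Set.range G) : Set (PA m))) := by
    intro h n G
    rw [Fin.range_cons, Algebra.adjoin_insert_adjoin]
  have hgs : z ∈ (P.comap (Algebra.adjoin ℂ (Set.range (Fin.cons g s))).val).map
      (Algebra.adjoin ℂ (Set.range (Fin.cons g s))).val := by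
    refine mem_map_comap_of_mem_adjoin_insert (jacobianDerivation (Fin.cons g s))
      (fun _ => jacobianDerivation_eq_zero_of_mem_adjoin _) P (fun u hu => ?_) ?_
      (hcons f _ ▸ hz) hzP
    · simpa [pbr_one_eq_jacobianDerivation] using hP u hu g
    · rwa [← pbr_one_eq_jacobianDerivation]
  refine Ideal.map_le_iff_le_comap.mpr ?_ hgs
  rintro ⟨w, hw⟩ hwP
  refine mem_map_comap_of_mem_adjoin_insert (jacobianDerivation (Fin.cons f s))
    (fun _ hv => jacobianDerivation_eq_zero_of_mem_adjoin _ ?_) P (fun u hu => ?_) ?_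
    (hcons g s ▸ hw) hwP
  · exact Algebra.adjoin_mono (by simp [Set.subset_insert]) hv
  · simpa [pbr_one_eq_jacobianDerivation] using hP u hu f
  · rwa [← pbr_one_eq_jacobianDerivation, pbr_one_swap, neg_mem_iff]

end Bracket

theorem statement_12_general {m : ℕ}
    (s : Fin m → PA m)
    (C : Subalgebra ℂ (PA m)) (hC : C = Algebra.adjoin ℂ (Set.range s))
    (P : Ideal (PA m)) (hPprime : P.IsPrime)
    (hPpoisson : ∀ u ∈ P, ∀ r : PA m, pbr s (fun _ => 1) u r ∈ P)
    (hproper : ¬ ∀ f g : PA m, pbr s (fun _ => 1) f g ∈ P) :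
    P ∈ (Ideal.map C.val (Ideal.comap C.val P)).minimalPrimes ∧
    ∃ Q : Ideal C, Q.IsPrime ∧ P ∈ (Ideal.map C.val Q).minimalPrimes := by
  obtain ⟨f, g, hfg⟩ : ∃ f g : PA m, pbr s (fun _ => 1) f g ∉ P := by
    simpa only [not_forall] using hproper
  have hmin : P ∈ (Ideal.map C.val (Ideal.comap C.val P)).minimalPrimes := by
    refine ⟨⟨hPprime, Ideal.map_comap_le⟩, fun p ⟨hp, hCp⟩ hpP => ?_⟩
    subst hC
    refine Ideal.le_of_forall_isAlgebraic_quotient hpP _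
      (fun z hz hzP => hCp (mem_map_comap_adjoin_of_mem_adjoin_cons s P hPpoisson hfg hz hzP))
      fun a => isAlgebraic_map_adjoin_of_jacobian_det_ne_zero _
        (Ideal.Quotient.mkₐ_surjective ℂ p) _ ?_ _
    rw [← pbr_one_eq_det, Ideal.Quotient.mkₐ_eq_mk, ne_eq, Ideal.Quotient.eq_zero_iff_mem]
    exact fun h => hfg (hpP h)
  exact ⟨hmin, _, Ideal.IsPrime.comap _, hmin⟩

theorem statement_12 {m : ℕ} (hm : 1 ≤ m)
    (s : Fin m → PA m)
    (hind : AlgebraicIndependent ℂ s)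
    (C : Subalgebra ℂ (PA m)) (hC : C = Algebra.adjoin ℂ (Set.range s))
    (P : Ideal (PA m)) (hPprime : P.IsPrime)
    (hPpoisson : ∀ u ∈ P, ∀ r : PA m, pbr s (fun _ => 1) u r ∈ P)
    (hproper : ¬ ∀ f g : PA m, pbr s (fun _ => 1) f g ∈ P) :
    P ∈ (Ideal.map C.val (Ideal.comap C.val P)).minimalPrimes ∧
    ∃ Q : Ideal C, Q.IsPrime ∧ P ∈ (Ideal.map C.val Q).minimalPrimes :=
  statement_12_general s C hC P hPprime hPpoisson hproper

end
end

section
/- Let p = (α_1,…,α_n) ∈ ℂⁿ, let M_p = (x_1−α_1)A + ⋯ + (x_n−α_n)A be the corresponding maximal ideal of A, and for 1 ≤ i ≤ n−2 set g_i = t_i(p)·s_i − s_i(p)·t_i ∈ A. Then M_p is a Poisson ideal of A if and only if at least one of the following holds: (1) s_i(p) = 0 and t_i(p) = 0 for some i; (2) g_1, …, g_{n−2} are algebraically dependent over ℂ; (3) p is a singular point of the affine variety determined by g_1, …, g_{n−2}, i.e. every (n−2)×(n−2) minor of the (n−2)×n Jacobian matrix whose (i,j) entry is (∂g_i/∂x_j)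 vanishes at p. -/
/- STATEMENT 13: For p ∈ ℂⁿ and the maximal ideal M_p = (x_1−α_1,…,x_n−α_n), with
g_i = t_i(p)·s_i − s_i(p)·t_i, the ideal M_p is Poisson iff (1) some s_i, t_i have a
common zero at p, or (2) g_1,…,g_{n−2} are algebraically dependent over ℂ, or
(3) p is a singular point of the variety of g_1,…,g_{n−2} (all maximal minors of the
Jacobian matrix of the g_i vanish at p). -/

noncomputable section
open MvPolynomial

/-!
At `p` the bracket `{u, r}` evaluates to the determinant with rows `∇u(p)`, `∇r(p)` and
`t_i(p)∇s_i(p) - s_i(p)∇t_i(p) = ∇g_i(p)`. Gradients at `p` of elements of `M_p`, and of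
arbitrary polynomials, are arbitrary vectors, so `M_p` is Poisson iff the rows `∇g_i(p)` are
linearly dependent, i.e. iff every maximal minor of the Jacobian of `g` vanishes at `p`. A common
zero of `s_i, t_i` makes a row vanish, and an algebraic relation of least degree among the `g_i`
yields, by the chain rule, a nonzero polynomial vector killing the Jacobian matrix of `g`, so
its maximal minors vanish identically.
-/

section LinearAlgebra

variable {K : Type*} [Field K]

theorem exists_linearIndependent_finCons_iff {E : Type*} [AddCommGroup E] [Module K E]
    [FiniteDimensional K E] {k : ℕ} {V : Fin k → E} (hk : k < Module.finrank K E) :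
    (∃ v, LinearIndependent K (Fin.cons v V : Fin (k + 1) → E)) ↔ LinearIndependent K V := by
  refine ⟨fun ⟨_, hv⟩ => (linearIndependent_finCons.mp hv).1, fun hV => ?_⟩
  have hlt : Submodule.span K (Set.range V) < ⊤ := by
    refine lt_top_iff_ne_top.mpr fun htop => ?_
    have := finrank_range_le_card (R := K) V
    rw [Set.finrank, htop, finrank_top, Fintype.card_fin] at this
    omega
  obtain ⟨v, -, hv⟩ := SetLike.exists_of_lt hlt
  exact ⟨v, linearIndependent_finCons.mpr ⟨hV, hv⟩⟩

namespace Matrix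

theorem det_submatrix_eq_zero_of_vecMul_eq_zero {A n ι : Type*} [CommRing A] [IsDomain A]
    [Fintype n] [DecidableEq n] {M : Matrix n ι A} {a : n → A} (ha : a ≠ 0) (hM : a ᵥ* M = 0)
    (c : n → ι) : (M.submatrix id c).det = 0 :=
  exists_vecMul_eq_zero_iff.mp ⟨a, ha, funext fun k => congrFun hM (c k)⟩

theorem exists_det_submatrix_ne_zero_iff {n ι : Type*} [Fintype n] [DecidableEq n] [Fintype ι]
    (M : Matrix n ι K) :
    (∃ c : n → ι, Function.Injective c ∧ (M.submatrix id c).det ≠ 0) ↔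
      LinearIndependent K M.row := by
  constructor
  · rintro ⟨c, -, hc⟩
    exact (linearIndependent_rows_of_det_ne_zero hc).of_comp (LinearMap.funLeft K K c)
  · intro hM
    obtain ⟨κ, a, ha, hspan, hli⟩ := exists_linearIndependent' K M.col
    have : Finite κ := hli.finite
    have := Fintype.ofFinite κ
    have hcard : Fintype.card n = Fintype.card κ := by
      rw [← hM.rank_matrix, rank_eq_finrank_span_cols, ← hspan, finrank_span_eq_card hli]
    let e : n ≃ κ := Fintype.equivOfCardEq hcard
    refine ⟨a ∘ e, ha.comp e.injective, ?_⟩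
    rw [← isUnit_iff_ne_zero, ← isUnit_iff_isUnit_det, ← linearIndependent_cols_iff_isUnit]
    exact hli.comp e e.injective

theorem exists_det_of_finCons_finCons_ne_zero_iff {k : ℕ} (W : Fin k → Fin (k + 2) → K) :
    (∃ v w, (of (Fin.cons v (Fin.cons w W))).det ≠ 0) ↔ LinearIndependent K W := by
  have hdet (M : Matrix (Fin (k + 2)) (Fin (k + 2)) K) :
      M.det ≠ 0 ↔ LinearIndependent K M.row := by
    rw [linearIndependent_rows_iff_isUnit, isUnit_iff_isUnit_det, isUnit_iff_ne_zero]
  calc (∃ v w, (of (Fin.cons v (Fin.cons w W))).det ≠ 0)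
      ↔ ∃ w, ∃ v, LinearIndependent K (Fin.cons v (Fin.cons w W) : Fin (k + 2) → _) := by
        simp only [hdet]
        exact exists_comm
    _ ↔ ∃ w, LinearIndependent K (Fin.cons w W : Fin (k + 1) → _) :=
        exists_congr fun _ => exists_linearIndependent_finCons_iff (by simp)
    _ ↔ LinearIndependent K W := exists_linearIndependent_finCons_iff (by simp)

end Matrix

end LinearAlgebra

namespace MvPolynomial

variable {σ ι R : Type*}

open Matrix

section CommSemiring

variable [CommSemiring R]

def jacobian (g : ι → MvPolynomial σ R) : Matrix ι σ (MvPolynomial σ R) :=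
  of fun i j => pderiv j (g i)

theorem totalDegree_pderiv_lt {F : MvPolynomial σ R} {i : σ} (h : pderiv i F ≠ 0) :
    (pderiv i F).totalDegree < F.totalDegree := by
  have hlt : ∀ d ∈ (pderiv i F).support, (d.sum fun _ e => e) < F.totalDegree := by
    intro d hd
    rw [mem_support_iff, coeff_pderiv] at hd
    have := le_totalDegree (mem_support_iff.mpr (left_ne_zero_of_mul hd))
    rw [Finsupp.sum_add_index' (fun _ => rfl) (fun _ _ _ => rfl),
      Finsupp.sum_single_index rfl] at this
    omega
  obtain ⟨d, hd⟩ := support_nonempty.mpr h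
  exact (Finset.sup_lt_iff ((Nat.zero_le _).trans_lt (hlt d hd))).mpr hlt

theorem exists_pderiv_ne_zero [NoZeroDivisors R] [CharZero R] {F : MvPolynomial σ R}
    (hF : F.totalDegree ≠ 0) : ∃ i, pderiv i F ≠ 0 := by
  obtain ⟨d, hd, i, hi⟩ : ∃ d ∈ F.support, ∃ i, d i ≠ 0 := by
    simpa [totalDegree_eq_zero_iff] using hF
  refine ⟨i, fun hzero => mem_support_iff.mp hd ?_⟩
  have hle : Finsupp.single i 1 ≤ d := Finsupp.single_le_iff.mpr (Nat.one_le_iff_ne_zero.mpr hi)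
  have := coeff_pderiv (i := i) F (d - Finsupp.single i 1)
  rw [hzero, coeff_zero, tsub_add_cancel_of_le hle, eq_comm, mul_eq_zero] at this
  exact this.resolve_right (Nat.cast_add_one_ne_zero _)

theorem pderiv_aeval [Fintype ι] (g : ι → MvPolynomial σ R) (F : MvPolynomial ι R) (j : σ) :
    pderiv j (aeval g F) = ∑ i, aeval g (pderiv i F) * pderiv j (g i) := by
  classical
  induction F using MvPolynomial.induction_on with
  | C a => simp
  | add F G hF hG =>
    simp only [map_add, hF, hG, add_mul, Finset.sum_add_distrib]
  | mul_X F k hF =>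
    rw [map_mul, aeval_X, pderiv_mul, hF]
    simp only [pderiv_mul, pderiv_X, Pi.single_apply, mul_ite, mul_one, mul_zero, map_add,
      map_mul, aeval_X, apply_ite (aeval g), map_zero, add_mul, ite_mul, zero_mul,
      Finset.sum_add_distrib, Finset.sum_ite_eq, Finset.mem_univ, if_true, Finset.sum_mul]
    exact congrArg (· + _) (Finset.sum_congr rfl fun _ _ => mul_right_comm _ _ _)

end CommSemiring

section CommRing

variable [CommRing R]

theorem exists_vecMul_jacobian_eq_zero [IsDomain R] [CharZero R] [Fintype ι]
    {g : ι → MvPolynomial σ R} (hg : ¬ AlgebraicIndependent R g) :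
    ∃ a ≠ 0, a ᵥ* jacobian g = 0 := by
  obtain ⟨F₀, hF₀⟩ : ∃ F, aeval g F = 0 ∧ F ≠ 0 := by
    simpa only [algebraicIndependent_iff, not_forall, exists_prop] using hg
  -- by minimality of the degree of `F`, the `aeval g (pderiv i F)` cannot all vanish
  obtain ⟨F, ⟨hFg, hF0⟩, hmin⟩ := WellFounded.has_min (measure totalDegree).wf
    {F : MvPolynomial ι R | aeval g F = 0 ∧ F ≠ 0} ⟨F₀, hF₀⟩
  refine ⟨fun i => aeval g (pderiv i F), fun ha => ?_, ?_⟩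
  · have hdeg : F.totalDegree ≠ 0 := by
      intro hdeg
      rw [totalDegree_eq_zero_iff_eq_C] at hdeg
      rw [hdeg, aeval_C, algebraMap_eq, C_eq_zero] at hFg
      exact hF0 (by rw [hdeg, hFg, C_0])
    obtain ⟨i, hi⟩ := exists_pderiv_ne_zero hdeg
    exact hmin _ ⟨congrFun ha i, hi⟩ (totalDegree_pderiv_lt hi)
  · funext j
    simp only [vecMul, dotProduct, jacobian, of_apply, Pi.zero_apply]
    rw [← pderiv_aeval, hFg, map_zero]

theorem det_submatrix_jacobian_map_eval_eq_zero [IsDomain R] [CharZero R] [Fintype ι]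
    [DecidableEq ι] {g : ι → MvPolynomial σ R} (hg : ¬ AlgebraicIndependent R g) (p : σ → R)
    (c : ι → σ) : (((jacobian g).map (eval p)).submatrix id c).det = 0 := by
  obtain ⟨a, ha, haJ⟩ := exists_vecMul_jacobian_eq_zero hg
  rw [submatrix_map, ← RingHom.mapMatrix_apply, ← RingHom.map_det,
    det_submatrix_eq_zero_of_vecMul_eq_zero ha haJ, map_zero]

theorem jacobian_map_eval {g a b : ι → MvPolynomial σ R} {p : σ → R}
    (hg : ∀ i, g i = C (eval p (b i)) * a i - C (eval p (a i)) * b i) :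
    (jacobian g).map (eval p) =
      of fun i j => eval p (b i * pderiv j (a i) - a i * pderiv j (b i)) := by
  ext i j
  simp [jacobian, hg]

theorem sub_C_eval_mem_span_X_sub_C (p : σ → R) (u : MvPolynomial σ R) :
    u - C (eval p u) ∈ Ideal.span (Set.range fun j => X j - C (p j)) := by
  induction u using MvPolynomial.induction_on with
  | C a => simp
  | add f g hf hg => simpa [add_sub_add_comm] using Ideal.add_mem _ hf hg
  | mul_X f j hf =>
    have : f * X j - C (eval p (f * X j)) =
        (f - C (eval p f)) * X j + C (eval p f) * (X j - C (p j)) := by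
      simp only [eval_mul, eval_X, C_mul]; ring
    rw [this]
    exact Ideal.add_mem _ (Ideal.mul_mem_right _ _ hf)
      (Ideal.mul_mem_left _ _ (Ideal.subset_span ⟨j, rfl⟩))

theorem span_X_sub_C_eq_ker_eval (p : σ → R) :
    Ideal.span (Set.range fun j => X j - C (p j)) = RingHom.ker (eval p) := by
  refine le_antisymm (Ideal.span_le.mpr ?_) fun u hu => ?_
  · rintro _ ⟨j, rfl⟩
    simp
  · simpa [RingHom.mem_ker.mp hu] using sub_C_eval_mem_span_X_sub_C p u

theorem pderiv_sum_C_mul_X_sub_C [Fintype σ] (v p : σ → R) (i : σ) :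
    pderiv i (∑ j, C (v j) * (X j - C (p j))) = C (v i) := by
  classical
  simp [pderiv_X, Pi.single_apply]

end CommRing

end MvPolynomial


open Matrix

theorem eval_pbr {m : ℕ} (s t : Fin m → PA m) (p : Fin (m + 2) → ℂ) (u r : PA m) :
    eval p (pbr s t u r) = (of (Fin.cons (fun j => eval p (pderiv j u))
      (Fin.cons (fun j => eval p (pderiv j r))
        fun k j => eval p (t k * pderiv j (s k) - s k * pderiv j (t k))))).det := by
  rw [pbr, RingHom.map_det]
  congr 1
  ext i j
  refine Fin.cases ?_ (Fin.cases ?_ fun k => ?_) i <;> rfl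

theorem pbr_mem_span_X_sub_C_iff {m : ℕ} (s t : Fin m → PA m) (p : Fin (m + 2) → ℂ) :
    (∀ u ∈ Ideal.span (Set.range fun j => X j - C (p j)), ∀ r,
        pbr s t u r ∈ Ideal.span (Set.range fun j => X j - C (p j))) ↔
      ∀ v w, (of (Fin.cons v (Fin.cons w
        fun k j => eval p (t k * pderiv j (s k) - s k * pderiv j (t k))))).det = 0 := by
  simp only [span_X_sub_C_eq_ker_eval, RingHom.mem_ker, eval_pbr]
  refine ⟨fun h v w => ?_, fun h u _ r => h _ _⟩
  have hgrad (v : Fin (m + 2) → ℂ) :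
      (fun j => eval p (pderiv j (∑ i, C (v i) * (X i - C (p i))))) = v := by
    funext j
    rw [pderiv_sum_C_mul_X_sub_C, eval_C]
  have := h (∑ i, C (v i) * (X i - C (p i))) (by simp) (∑ i, C (w i) * (X i - C (p i)))
  rwa [hgrad, hgrad] at this

theorem statement_13_general {m : ℕ}
    (s t : Fin m → PA m)
    (p : Fin (m + 2) → ℂ)
    (Mp : Ideal (PA m)) (hMp : Mp = Ideal.span (Set.range fun j => X j - C (p j)))
    (g : Fin m → PA m)
    (hg : ∀ i, g i = C (eval p (t i)) * s i - C (eval p (s i)) * t i) :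
    (∀ u ∈ Mp, ∀ r : PA m, pbr s t u r ∈ Mp) ↔
      ((∃ i, eval p (s i) = 0 ∧ eval p (t i) = 0) ∨
       (¬ AlgebraicIndependent ℂ g) ∨
       (∀ c : Fin m → Fin (m + 2), Function.Injective c →
          Matrix.det (Matrix.of fun i k => eval p (pderiv (c k) (g i))) = 0)) := by
  set J := (jacobian g).map (eval p)
  have hJ : (fun i j => eval p (t i * pderiv j (s i) - s i * pderiv j (t i))) = J :=
    (jacobian_map_eval hg).symm
  have hbracket : (∀ v w, (of (Fin.cons v (Fin.cons w J))).det = 0) ↔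
      ¬ LinearIndependent ℂ J.row := by
    rw [← exists_det_of_finCons_finCons_ne_zero_iff]
    simp only [not_exists, ne_eq, not_not]
    exact Iff.rfl
  have hminors : (∀ c : Fin m → Fin (m + 2), Function.Injective c → (J.submatrix id c).det = 0) ↔
      ¬ LinearIndependent ℂ J.row := by
    simpa using (exists_det_submatrix_ne_zero_iff J).not
  rw [hMp, pbr_mem_span_X_sub_C_iff, hJ, hbracket]
  refine ⟨fun h => Or.inr (Or.inr (hminors.mpr h)), ?_⟩
  rintro (⟨i, hs, ht⟩ | hdep | hJ0)
  · refine fun hli => hli.ne_zero i ?_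
    ext j
    simp [← hJ, row, hs, ht]
  · exact hminors.mp fun c _ => det_submatrix_jacobian_map_eval_eq_zero hdep p c
  · exact hminors.mp hJ0

theorem statement_13 {m : ℕ} (hm : 1 ≤ m)
    (s t : Fin m → PA m)
    (ht : ∀ i, t i ≠ 0)
    (hcop : ∀ i, ∀ d : PA m, d ∣ s i → d ∣ t i → IsUnit d)
    (hind : AlgebraicIndependent ℂ
      (fun i => algebraMap (PA m) (FB m) (s i) / algebraMap (PA m) (FB m) (t i)))
    (p : Fin (m + 2) → ℂ)
    (Mp : Ideal (PA m)) (hMp : Mp = Ideal.span (Set.range fun j => X j - C (p j)))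
    (g : Fin m → PA m)
    (hg : ∀ i, g i = C (eval p (t i)) * s i - C (eval p (s i)) * t i) :
    (∀ u ∈ Mp, ∀ r : PA m, pbr s t u r ∈ Mp) ↔
      ((∃ i, eval p (s i) = 0 ∧ eval p (t i) = 0) ∨
       (¬ AlgebraicIndependent ℂ g) ∨
       (∀ c : Fin m → Fin (m + 2), Function.Injective c →
          Matrix.det (Matrix.of fun i k => eval p (pderiv (c k) (g i))) = 0)) :=
  statement_13_general s t p Mp hMp g hg

end
end

section
/- For i = 1,…,n−2 let (λ_i,μ_i) ∈ ℂ²∖{(0,0)} and set f^i = λ_i s_i − μ_i t_i. Suppose the ideal I = f^1·A + ⋯ + f^{n−2}·A is a proper ideal of A and let P be a minimal prime ideal of A over I. If P is residually null, then P is not Poisson primitive. -/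
/-!
If `P` is residually null, every ideal containing `P` is a Poisson ideal; applied to the
maximal ideal `M` witnessing Poisson primitivity, this forces `P = M`. But a maximal ideal of
`ℂ[x_1,…,x_n]` has height `n`, while by Krull's height theorem a minimal prime over an ideal
with `n - 2` generators has height at most `n - 2`.
-/

noncomputable section
open MvPolynomial

theorem Ideal.eq_of_forall_bracket_mem {R : Type*} [CommRing R] (br : R → R → R)
    {P M : Ideal R} (hbr : ∀ f g, br f g ∈ P) (hPM : P ≤ M)
    (hmin : ∀ J : Ideal R, (∀ u ∈ J, ∀ r, br u r ∈ J) → J ≤ M → J ≤ P) : P = M :=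
  le_antisymm hPM (hmin M (fun u _ r => hPM (hbr u r)) le_rfl)

theorem Ideal.height_le_card_of_mem_minimalPrimes_span_range {R : Type*} [CommRing R]
    [IsNoetherianRing R] {ι : Type*} [Fintype ι] (f : ι → R) {p : Ideal R}
    (hp : p ∈ (Ideal.span (Set.range f)).minimalPrimes) : p.height ≤ Fintype.card ι := by
  classical
  have hs : ((Finset.univ.image f : Finset R) : Set R) = Set.range f := by simp
  calc p.height ≤ (Finset.univ.image f).card :=
        Ideal.height_le_card_of_mem_minimalPrimes_span_finset (hs ▸ hp)
    _ ≤ Fintype.card ι := by exact_mod_cast Finset.card_image_le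

theorem MvPolynomial.height_eq_of_isMaximal {K : Type*} [Field K] :
    ∀ {n : ℕ} (M : Ideal (MvPolynomial (Fin n) K)) [M.IsMaximal], M.height = n
  | 0, M, _ => by
    have h := M.height_le_ringKrullDim_of_ne_top Ideal.IsPrime.ne_top'
    rw [MvPolynomial.ringKrullDim_of_isNoetherianRing, ringKrullDim_eq_zero_of_field] at h
    simpa using h
  | n + 1, M, _ => by
    set M' := M.map (finSuccEquiv K n).toRingEquiv
    have : M'.IsMaximal := Ideal.map_isMaximal_of_equiv _
    -- `K[x_1,…,x_n]` is a Jacobson ring, so `M'` lies over a maximal ideal.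
    have : (M'.under (MvPolynomial (Fin n) K)).IsMaximal :=
      Polynomial.isMaximal_comap_C_of_isJacobsonRing _
    have : M'.LiesOver (M'.under (MvPolynomial (Fin n) K)) := Ideal.over_under M'
    rw [← (finSuccEquiv K n).toRingEquiv.height_map,
      Polynomial.height_eq_height_add_one (M'.under _), height_eq_of_isMaximal]
    norm_cast

theorem statement_15_general {m : ℕ}
    (s t : Fin m → PA m)
    (fI : Fin m → PA m)
    (I : Ideal (PA m)) (hI : I = Ideal.span (Set.range fI))
    (P : Ideal (PA m)) (hP : P ∈ I.minimalPrimes)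
    -- P is residually null
    (hrn : ∀ f g : PA m, pbr s t f g ∈ P) :
    -- P is not Poisson primitive
    ¬ ∃ M : Ideal (PA m), M.IsMaximal ∧ P ≤ M ∧
        ∀ J : Ideal (PA m), (∀ u ∈ J, ∀ r : PA m, pbr s t u r ∈ J) → J ≤ M → J ≤ P := by
  rintro ⟨M, hM, hPM, hmin⟩
  obtain rfl : P = M := Ideal.eq_of_forall_bracket_mem (pbr s t) hrn hPM hmin
  have hkrull := Ideal.height_le_card_of_mem_minimalPrimes_span_range fI (hI ▸ hP)
  rw [MvPolynomial.height_eq_of_isMaximal, Fintype.card_fin] at hkrull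
  norm_cast at hkrull
  omega

theorem statement_15 {m : ℕ} (hm : 1 ≤ m)
    (s t : Fin m → PA m)
    (ht : ∀ i, t i ≠ 0)
    (hcop : ∀ i, ∀ d : PA m, d ∣ s i → d ∣ t i → IsUnit d)
    (hind : AlgebraicIndependent ℂ
      (fun i => algebraMap (PA m) (FB m) (s i) / algebraMap (PA m) (FB m) (t i)))
    (lam mu : Fin m → ℂ) (hlm : ∀ i, (lam i, mu i) ≠ (0, 0))
    (fI : Fin m → PA m) (hfI : ∀ i, fI i = C (lam i) * s i - C (mu i) * t i)
    (I : Ideal (PA m)) (hI : I = Ideal.span (Set.range fI)) (hIproper : I ≠ ⊤)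
    (P : Ideal (PA m)) (hP : P ∈ I.minimalPrimes)
    -- P is residually null
    (hrn : ∀ f g : PA m, pbr s t f g ∈ P) :
    -- P is not Poisson primitive
    ¬ ∃ M : Ideal (PA m), M.IsMaximal ∧ P ≤ M ∧
        ∀ J : Ideal (PA m), (∀ u ∈ J, ∀ r : PA m, pbr s t u r ∈ J) → J ≤ M → J ≤ P :=
  statement_15_general s t fI I hI P hP hrn

end
end
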